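/- arXiv:math/0510196 — 3 statements merged into one kernel-verified Lean document; each statement's English description precedes it below -/
import Mathlib

section
/- Let A, B, C be categories with dualities, F : A → B and G : B → C functors, and Ψ_F : F → D_{A,B}F and Ψ_G : G → D_{B,C}G symmetric natural transformations. Then the composite G∘F → D_{B,C}G ∘ D_{A,B}F → D_{A,C}(G∘F) (where the last arrow arises from Φ_B⁻¹ : D_B² → id applied inside D_C ∘ G ∘ D_B² ∘ F ∘ D_A) is a symmetric natural transformation for the duality D_{A,C} on Fun(A, C). -/
open CategoryTheory

/-- A (bare-hands) duality on a category: a contravariant endofunctor together with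
a natural isomorphism `Φ : id → D²` satisfying the coherence relation. -/
structure Duality (A : Type*) [Category A] where
  obj : A → A
  map : ∀ {X Y : A}, (X ⟶ Y) → (obj Y ⟶ obj X)
  map_id : ∀ X : A, map (𝟙 X) = 𝟙 (obj X)
  map_comp : ∀ {X Y Z : A} (f : X ⟶ Y) (g : Y ⟶ Z), map (f ≫ g) = map g ≫ map f
  Φ : ∀ X : A, X ⟶ obj (obj X)
  Φ_natural : ∀ {X Y : A} (f : X ⟶ Y), f ≫ Φ Y = Φ X ≫ map (map f)
  Φ_iso : ∀ X : A, IsIso (Φ X)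
  coherence : ∀ X : A, Φ (obj X) ≫ map (Φ X) = 𝟙 (obj X)

variable {A B C : Type*} [Category A] [Category B] [Category C]

/-- `Ψ` is a natural transformation `F ⟶ D_{A,B} F = D_B ∘ F ∘ D_A`
(objectwise `Ψ X : F X ⟶ D_B(F(D_A X))`). -/
def IsNatToDual (dA : Duality A) (dB : Duality B) (F : A ⥤ B)
    (Ψ : ∀ X : A, F.obj X ⟶ dB.obj (F.obj (dA.obj X))) : Prop :=
  ∀ {X Y : A} (f : X ⟶ Y), F.map f ≫ Ψ Y = Ψ X ≫ dB.map (F.map (dA.map f))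

/-- `Ψ : F ⟶ D_{A,B}F` is symmetric: `D_{A,B}Ψ ∘ Φ_{A,B}(F) = Ψ`, which objectwise reads
`F(Φ_A X) ≫ Φ_B(F D_A² X) ≫ D_B(Ψ_{D_A X}) = Ψ X`. -/
def IsSymmetric (dA : Duality A) (dB : Duality B) (F : A ⥤ B)
    (Ψ : ∀ X : A, F.obj X ⟶ dB.obj (F.obj (dA.obj X))) : Prop :=
  ∀ X : A,
    F.map (dA.Φ X) ≫ dB.Φ (F.obj (dA.obj (dA.obj X))) ≫ dB.map (Ψ (dA.obj X)) = Ψ X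

/-- The composite of two symmetric natural transformations:
`G∘F → D_{B,C}G ∘ D_{A,B}F → D_{A,C}(G∘F)`, where the last arrow arises from
`Φ_B : id → D_B²` (applied inside `D_C ∘ G ∘ D_B² ∘ F ∘ D_A`). -/
def compSym (dA : Duality A) (dB : Duality B) (dC : Duality C) (F : A ⥤ B) (G : B ⥤ C)
    (ΨF : ∀ X : A, F.obj X ⟶ dB.obj (F.obj (dA.obj X)))
    (ΨG : ∀ Y : B, G.obj Y ⟶ dC.obj (G.obj (dB.obj Y))) :
    ∀ X : A, G.obj (F.obj X) ⟶ dC.obj (G.obj (F.obj (dA.obj X))) :=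
  fun X =>
    G.map (ΨF X) ≫ ΨG (dB.obj (F.obj (dA.obj X))) ≫
      dC.map (G.map (dB.Φ (F.obj (dA.obj X))))

/-! Symmetry of `Ψ : F ⟶ D F` can be rearranged by moving `Φ` across with its naturality and the
coherence `Φ_{D X} ≫ D Φ_X = 𝟙`, once on the side of the source duality and once on the side of
the target duality. With these two forms, the symmetry of the composite reduces to naturality of
`Ψ_G` at `F (Φ_A X)` and at `Ψ_F X`. -/

namespace Duality

variable {A : Type*} [Category A] (d : Duality A)

theorem Φ_comp_map_map_comp_map_Φ {X Y : A} (f : X ⟶ d.obj Y) :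
    d.Φ X ≫ d.map (d.map f) ≫ d.map (d.Φ Y) = f := by
  rw [← Category.assoc, ← d.Φ_natural, Category.assoc, d.coherence, Category.comp_id]

end Duality

namespace IsSymmetric

variable {dA : Duality A} {dB : Duality B} {F : A ⥤ B}
  {Ψ : ∀ X : A, F.obj X ⟶ dB.obj (F.obj (dA.obj X))}

theorem app_obj_comp_map_map_Φ (hΨ : IsSymmetric dA dB F Ψ) (X : A) :
    Ψ (dA.obj X) ≫ dB.map (F.map (dA.Φ X)) = dB.Φ (F.obj (dA.obj X)) ≫ dB.map (Ψ X) := by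
  rw [← hΨ X, dB.map_comp, dB.map_comp, ← Category.assoc, dB.Φ_comp_map_map_comp_map_Φ]

theorem Φ_comp_map_app_obj_comp (hΨ : IsSymmetric dA dB F Ψ) (X : A) :
    dB.Φ (F.obj X) ≫ dB.map (Ψ (dA.obj X) ≫ dB.map (F.map (dA.Φ X))) = Ψ X := by
  rw [dB.map_comp, ← Category.assoc, ← dB.Φ_natural, Category.assoc, hΨ X]

end IsSymmetric

section compSym

variable {dA : Duality A} {dB : Duality B} {dC : Duality C} {F : A ⥤ B} {G : B ⥤ C}
  {ΨF : ∀ X : A, F.obj X ⟶ dB.obj (F.obj (dA.obj X))}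
  {ΨG : ∀ Y : B, G.obj Y ⟶ dC.obj (G.obj (dB.obj Y))}

theorem IsNatToDual.compSym (hF : IsNatToDual dA dB F ΨF) (hG : IsNatToDual dB dC G ΨG) :
    IsNatToDual dA dC (F ⋙ G) (compSym dA dB dC F G ΨF ΨG) := by
  intro X Y f
  simp only [_root_.compSym, Functor.comp_map]
  rw [← G.map_comp_assoc, hF f, G.map_comp_assoc, ← Category.assoc (G.map _) (ΨG _), hG,
    Category.assoc, ← dC.map_comp, ← G.map_comp, ← dB.Φ_natural, G.map_comp, dC.map_comp]
  simp only [Category.assoc]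

theorem IsSymmetric.compSym (hFsym : IsSymmetric dA dB F ΨF) (hGnat : IsNatToDual dB dC G ΨG)
    (hGsym : IsSymmetric dB dC G ΨG) :
    IsSymmetric dA dC (F ⋙ G) (compSym dA dB dC F G ΨF ΨG) := by
  intro X
  simp only [_root_.compSym, Functor.comp_obj, Functor.comp_map]
  rw [dC.map_comp (G.map _), ← Category.assoc (dC.Φ _), hGsym.Φ_comp_map_app_obj_comp,
    ← Category.assoc, hGnat, Category.assoc, ← dC.map_comp, ← G.map_comp,
    hFsym.app_obj_comp_map_map_Φ, G.map_comp, dC.map_comp, ← Category.assoc, ← hGnat,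
    Category.assoc]

end compSym

/-- the composite of symmetric natural transformations is a symmetric
natural transformation for the duality `D_{A,C}` on `Fun(A, C)`. -/
theorem compSym_is_symmetric (dA : Duality A) (dB : Duality B) (dC : Duality C)
    (F : A ⥤ B) (G : B ⥤ C)
    (ΨF : ∀ X : A, F.obj X ⟶ dB.obj (F.obj (dA.obj X)))
    (ΨG : ∀ Y : B, G.obj Y ⟶ dC.obj (G.obj (dB.obj Y)))
    (hFnat : IsNatToDual dA dB F ΨF) (hFsym : IsSymmetric dA dB F ΨF)
    (hGnat : IsNatToDual dB dC G ΨG) (hGsym : IsSymmetric dB dC G ΨG) :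
    IsNatToDual dA dC (F ⋙ G) (compSym dA dB dC F G ΨF ΨG) ∧
      IsSymmetric dA dC (F ⋙ G) (compSym dA dB dC F G ΨF ΨG) :=
  ⟨hFnat.compSym hGnat, hFsym.compSym hGnat hGsym⟩
end

section
/- Let f, g : K → L be contiguous simplicial maps between simplicial complexes. Then their geometric realisations |f|, |g| : |K| → |L| are homotopic via the straight-line homotopy h(x, t) = (1−t)·|f|(x) + t·|g|(x), and moreover h is a stratified map with respect to the product stratification on |K| × [0,1] and the natural stratification of |L| by open simplices. -/
open Function Set

namespace Stmt13

/-- An abstract simplicial complex on a vertex type `V`. -/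
structure ASC (V : Type*) where
  faces : Set (Finset V)
  not_empty_mem : ∅ ∉ faces
  down_closed : ∀ s ∈ faces, ∀ t, t ⊆ s → t ≠ ∅ → t ∈ faces

/-- The geometric realisation of `K`, as the set of barycentric-coordinate
functions: nonnegative weights supported on a simplex of `K` and summing to `1`. -/
def real {V : Type*} (K : ASC V) : Set (V → ℝ) :=
  { w | (∀ v, 0 ≤ w v) ∧ ∃ s ∈ K.faces, support w ⊆ ↑s ∧ ∑ v ∈ s, w v = 1 }

/-- The open stratum of the realisation corresponding to a simplex `t`:
the points whose support is exactly `t`. -/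
def openStratum {V : Type*} (K : ASC V) (t : Finset V) : Set (V → ℝ) :=
  { w | w ∈ real K ∧ support w = ↑t }

/-- A vertex map `φ : V → W` is simplicial from `K` to `L` if it maps simplices of
`K` to simplices of `L`. -/
def IsSimplicialMap {V W : Type*} [DecidableEq W] (K : ASC V) (L : ASC W) (φ : V → W) : Prop :=
  ∀ s ∈ K.faces, s.image φ ∈ L.faces

/-- `φ` and `ψ` are contiguous: for every simplex `σ` of `K`, the union
`φ(σ) ∪ ψ(σ)` spans a simplex of `L`. -/
def Contiguous {V W : Type*} [DecidableEq W] (K : ASC V) (L : ASC W) (φ ψ : V → W) : Prop :=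
  ∀ s ∈ K.faces, s.image φ ∪ s.image ψ ∈ L.faces

/-- The realisation of a simplicial (vertex) map: pushforward of barycentric
coordinates. -/
noncomputable def push {V W : Type*} (φ : V → W) (w : V → ℝ) : W → ℝ :=
  fun u => ∑ᶠ v ∈ { v | φ v = u }, w v

/-- The straight-line homotopy `h(x, t) = (1-t)·|φ|(x) + t·|ψ|(x)`. -/
noncomputable def lineHomotopy {V W : Type*} (φ ψ : V → W) (w : V → ℝ) (t : ℝ) :
    W → ℝ :=
  (1 - t) • push φ w + t • push ψ w

/-!
A point `w` of the open simplex `s` has strictly positive weights on `s`, so `|φ|(w)` is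
supported on exactly `φ(s)`. For `0 < t < 1` a combination `(1 - t) a + t b` of nonnegative
functions is supported on `supp a ∪ supp b`, so `h(w, t)` lies in the open simplex
`φ(s) ∪ ψ(s)`, a simplex of `L` by contiguity.

Continuity is not coordinatewise obvious, as `|φ|(w)(u)` sums over a possibly infinite fibre.
But the weights of `w` sum to `1`, so for a finite `s₀` the mass of `w` off `s₀` is
`1 - ∑_{s₀} w`; this squeezes `|φ|(w)(u)` between two finite sums over `s₀` that agree at any
`w₀` supported in `s₀`.
-/

section Realisation

open Filter Topology

variable {V W : Type*}

def finiteProbWeights (V : Type*) : Set (V → ℝ) :=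
  { w | (∀ v, 0 ≤ w v) ∧ ∃ s : Finset V, support w ⊆ ↑s ∧ ∑ v ∈ s, w v = 1 }

lemma real_subset_finiteProbWeights (K : ASC V) : real K ⊆ finiteProbWeights V :=
  fun _ ⟨hw₀, s, _, hws, hsum⟩ => ⟨hw₀, s, hws, hsum⟩

lemma support_smul_add_smul_of_nonneg {α 𝕜 : Type*} [Ring 𝕜] [LinearOrder 𝕜]
    [IsStrictOrderedRing 𝕜] {f g : α → 𝕜} {a b : 𝕜} (ha : 0 < a) (hb : 0 < b)
    (hf : ∀ x, 0 ≤ f x) (hg : ∀ x, 0 ≤ g x) :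
    support (a • f + b • g) = support f ∪ support g := by
  ext x
  simp only [mem_support, mem_union, Pi.add_apply, Pi.smul_apply, smul_eq_mul, ne_eq,
    add_eq_zero_iff_of_nonneg (mul_nonneg ha.le (hf x)) (mul_nonneg hb.le (hg x)),
    mul_eq_zero, ha.ne', hb.ne', false_or]
  tauto

section push

variable (φ : V → W) {w : V → ℝ}

lemma push_nonneg (hw₀ : ∀ v, 0 ≤ w v) (u : W) : 0 ≤ push φ w u :=
  finsum_nonneg fun v => finsum_nonneg fun _ => hw₀ v

variable [DecidableEq W] {s : Finset V}

lemma push_eq_sum_filter (hw : support w ⊆ s) (u : W) :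
    push φ w u = ∑ v ∈ s with φ v = u, w v := by
  apply finsum_mem_eq_sum_of_inter_support_eq
  ext v
  simp only [mem_inter_iff, mem_ofPred_eq, Finset.coe_filter, mem_support]
  exact ⟨fun ⟨h, hv⟩ => ⟨⟨hw hv, h⟩, hv⟩, fun ⟨⟨_, h⟩, hv⟩ => ⟨h, hv⟩⟩

lemma sum_push (hw : support w ⊆ s) {t : Finset W} (hst : s.image φ ⊆ t) :
    ∑ u ∈ t, push φ w u = ∑ v ∈ s, w v := by
  simp_rw [push_eq_sum_filter φ hw]
  exact Finset.sum_fiberwise_of_maps_to (fun v hv => hst (Finset.mem_image_of_mem φ hv)) w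

lemma support_push_subset (hw : support w ⊆ s) : support (push φ w) ⊆ s.image φ := by
  intro u hu
  rw [mem_support, push_eq_sum_filter φ hw u] at hu
  obtain ⟨v, hv, -⟩ := Finset.exists_ne_zero_of_sum_ne_zero hu
  rw [Finset.mem_filter] at hv
  exact hv.2 ▸ Finset.mem_image_of_mem φ hv.1

lemma support_push (hw₀ : ∀ v, 0 ≤ w v) (hw : support w = s) :
    support (push φ w) = s.image φ := by
  refine (support_push_subset φ hw.subset).antisymm ?_
  rw [Finset.coe_image]
  rintro _ ⟨v, hv, rfl⟩
  have hv_pos : 0 < w v := (hw₀ v).lt_of_ne' (by rwa [← mem_support, hw])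
  rw [mem_support, push_eq_sum_filter φ hw.subset]
  exact (hv_pos.trans_le <| Finset.single_le_sum (f := w) (s := {x ∈ s | φ x = φ v})
    (fun x _ => hw₀ x) (Finset.mem_filter.2 ⟨hv, rfl⟩)).ne'

lemma sum_filter_le_push (hw₀ : ∀ v, 0 ≤ w v) (hw : (support w).Finite) (s : Finset V)
    (u : W) : ∑ v ∈ s with φ v = u, w v ≤ push φ w u := by
  classical
  rw [push_eq_sum_filter φ (s := s ∪ hw.toFinset) (by simp)]
  exact Finset.sum_le_sum_of_subset_of_nonneg
    (Finset.filter_subset_filter _ Finset.subset_union_left) fun v _ _ => hw₀ v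

lemma push_le_sum_filter_add (hw : w ∈ finiteProbWeights V) (s : Finset V) (u : W) :
    push φ w u ≤ ∑ v ∈ s with φ v = u, w v + (1 - ∑ v ∈ s, w v) := by
  classical
  obtain ⟨hw₀, s', hws', hsum⟩ := hw
  have hws : support w ⊆ ↑(s ∪ s') := hws'.trans (by simp)
  have htotal : ∑ v ∈ s ∪ s', w v = 1 :=
    (Finset.sum_subset Finset.subset_union_right fun v _ hv =>
      notMem_support.1 fun h => hv (hws' h)).symm.trans hsum
  have hcompl : ∑ v ∈ s with ¬φ v = u, w v ≤ ∑ v ∈ s ∪ s' with ¬φ v = u, w v :=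
    Finset.sum_le_sum_of_subset_of_nonneg
      (Finset.filter_subset_filter _ Finset.subset_union_left) fun v _ _ => hw₀ v
  rw [push_eq_sum_filter φ hws]
  linarith [Finset.sum_filter_add_sum_filter_not (s ∪ s') (φ · = u) w,
    Finset.sum_filter_add_sum_filter_not s (φ · = u) w]

omit [DecidableEq W] in
lemma continuousOn_push_apply (u : W) :
    ContinuousOn (fun w => push φ w u) (finiteProbWeights V) := by
  classical
  intro w₀ ⟨_, s, hws, hsum⟩
  have hlower : Tendsto (fun w => ∑ v ∈ s with φ v = u, w v) (𝓝[finiteProbWeights V] w₀)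
      (𝓝 (push φ w₀ u)) := by
    rw [push_eq_sum_filter φ hws]
    exact Continuous.continuousWithinAt (by fun_prop)
  have hupper : Tendsto (fun w => ∑ v ∈ s with φ v = u, w v + (1 - ∑ v ∈ s, w v))
      (𝓝[finiteProbWeights V] w₀) (𝓝 (push φ w₀ u)) := by
    have h := (Continuous.tendsto (by fun_prop) w₀ :
      Tendsto (fun w : V → ℝ => ∑ v ∈ s with φ v = u, w v + (1 - ∑ v ∈ s, w v)) _ _)
    rw [hsum, sub_self, add_zero, ← push_eq_sum_filter φ hws] at h
    exact tendsto_nhdsWithin_of_tendsto_nhds h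
  refine tendsto_of_tendsto_of_tendsto_of_le_of_le' hlower hupper ?_ ?_ <;>
    refine eventually_nhdsWithin_of_forall fun w ⟨hw₀, s', hws', hsum'⟩ => ?_
  · exact sum_filter_le_push φ hw₀ (s'.finite_toSet.subset hws') s u
  · exact push_le_sum_filter_add φ ⟨hw₀, s', hws', hsum'⟩ s u

variable {K : ASC V} {L : ASC W}

lemma push_mem_real (hφ : IsSimplicialMap K L φ) (hw : w ∈ real K) : push φ w ∈ real L := by
  obtain ⟨hw₀, s, hs, hws, hsum⟩ := hw
  exact ⟨push_nonneg φ hw₀, s.image φ, hφ s hs, support_push_subset φ hws,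
    (sum_push φ hws subset_rfl).trans hsum⟩

lemma push_mem_openStratum (hφ : IsSimplicialMap K L φ) (hw : w ∈ openStratum K s) :
    push φ w ∈ openStratum L (s.image φ) :=
  ⟨push_mem_real φ hφ hw.1, support_push φ hw.1.1 hw.2⟩

end push

section lineHomotopy

variable {φ ψ : V → W} {w : V → ℝ} {t : ℝ}

lemma lineHomotopy_apply (u : W) :
    lineHomotopy φ ψ w t u = (1 - t) * push φ w u + t * push ψ w u :=
  rfl

lemma lineHomotopy_zero : lineHomotopy φ ψ w 0 = push φ w := by
  simp [lineHomotopy]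

lemma lineHomotopy_one : lineHomotopy φ ψ w 1 = push ψ w := by
  simp [lineHomotopy]

variable (φ ψ) in
lemma continuousOn_lineHomotopy :
    ContinuousOn (fun p : (V → ℝ) × ℝ => lineHomotopy φ ψ p.1 p.2) (finiteProbWeights V ×ˢ univ) := by
  refine continuousOn_pi.2 fun u => ?_
  have hφ : ContinuousOn (fun p : (V → ℝ) × ℝ => push φ p.1 u) (finiteProbWeights V ×ˢ univ) :=
    (continuousOn_push_apply φ u).comp continuousOn_fst mapsTo_fst_prod
  have hψ : ContinuousOn (fun p : (V → ℝ) × ℝ => push ψ p.1 u) (finiteProbWeights V ×ˢ univ) :=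
    (continuousOn_push_apply ψ u).comp continuousOn_fst mapsTo_fst_prod
  exact ((continuousOn_const.sub continuousOn_snd).mul hφ).add (continuousOn_snd.mul hψ)

variable [DecidableEq W] {K : ASC V} {L : ASC W}

lemma lineHomotopy_mem_real (hcont : Contiguous K L φ ψ) (hw : w ∈ real K)
    (ht : t ∈ Icc (0 : ℝ) 1) : lineHomotopy φ ψ w t ∈ real L := by
  obtain ⟨hw₀, s, hs, hws, hsum⟩ := hw
  refine ⟨fun u => ?_, _, hcont s hs, ?_, ?_⟩
  · rw [lineHomotopy_apply]
    exact add_nonneg (mul_nonneg (sub_nonneg.2 ht.2) (push_nonneg φ hw₀ u))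
      (mul_nonneg ht.1 (push_nonneg ψ hw₀ u))
  · rw [Finset.coe_union]
    exact (support_add _ _).trans <| union_subset_union
      ((support_smul_subset_right _ _).trans (support_push_subset φ hws))
      ((support_smul_subset_right _ _).trans (support_push_subset ψ hws))
  · simp only [lineHomotopy_apply, Finset.sum_add_distrib, ← Finset.mul_sum,
      sum_push φ hws Finset.subset_union_left, sum_push ψ hws Finset.subset_union_right, hsum]
    ring

lemma lineHomotopy_mem_openStratum (hcont : Contiguous K L φ ψ) {s : Finset V}
    (hw : w ∈ openStratum K s) (ht : t ∈ Ioo (0 : ℝ) 1) :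
    lineHomotopy φ ψ w t ∈ openStratum L (s.image φ ∪ s.image ψ) := by
  obtain ⟨hw_real, hws⟩ := hw
  refine ⟨lineHomotopy_mem_real hcont hw_real (Ioo_subset_Icc_self ht), ?_⟩
  rw [lineHomotopy, support_smul_add_smul_of_nonneg (sub_pos.2 ht.2) ht.1
    (push_nonneg φ hw_real.1) (push_nonneg ψ hw_real.1), support_push φ hw_real.1 hws,
    support_push ψ hw_real.1 hws, Finset.coe_union]

end lineHomotopy

end Realisation

/-- if `f, g : K → L` are contiguous simplicial maps, then the
straight-line homotopy `h(x,t) = (1−t)|f|(x) + t|g|(x)` is a homotopy from `|f|`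
to `|g|` inside `|L|`; it is continuous; and it is a stratified map with respect to
the product stratification of `|K| × [0,1]` (by products of open simplices of `K`
with `{0}`, `{1}`, `(0,1)`) and the stratification of `|L|` by open simplices. -/
theorem contiguous_realisations_stratified_homotopic
    {V W : Type*} [DecidableEq W] (K : ASC V) (L : ASC W) (φ ψ : V → W)
    (hφ : IsSimplicialMap K L φ) (hψ : IsSimplicialMap K L ψ)
    (hcont : Contiguous K L φ ψ) :
    (∀ w ∈ real K, ∀ t ∈ Icc (0 : ℝ) 1, lineHomotopy φ ψ w t ∈ real L) ∧
    (∀ w, lineHomotopy φ ψ w 0 = push φ w ∧ lineHomotopy φ ψ w 1 = push ψ w) ∧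
    Continuous (fun p : real K × Icc (0 : ℝ) 1 =>
      lineHomotopy φ ψ (p.1 : V → ℝ) (p.2 : ℝ)) ∧
    (∀ s ∈ K.faces, ∀ T ∈ ({{0}, {1}, Ioo 0 1} : Set (Set ℝ)),
      ∃ t ∈ L.faces, ∀ w ∈ openStratum K s, ∀ u ∈ T ∩ Icc (0 : ℝ) 1,
        lineHomotopy φ ψ w u ∈ openStratum L t) := by
  refine ⟨fun w hw t ht => lineHomotopy_mem_real hcont hw ht,
    fun w => ⟨lineHomotopy_zero, lineHomotopy_one⟩,
    (continuousOn_lineHomotopy φ ψ).comp_continuous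
      (f := fun p : real K × Icc (0 : ℝ) 1 => ((p.1 : V → ℝ), (p.2 : ℝ))) (by fun_prop)
      fun p => ⟨real_subset_finiteProbWeights K p.1.2, mem_univ _⟩, ?_⟩
  intro s hs T hT
  simp only [mem_insert_iff, mem_singleton_iff] at hT
  rcases hT with rfl | rfl | rfl
  · refine ⟨s.image φ, hφ s hs, fun w hw u hu => ?_⟩
    rw [hu.1, lineHomotopy_zero]
    exact push_mem_openStratum φ hφ hw
  · refine ⟨s.image ψ, hψ s hs, fun w hw u hu => ?_⟩
    rw [hu.1, lineHomotopy_one]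
    exact push_mem_openStratum ψ hψ hw
  · exact ⟨_, hcont s hs, fun w hw u hu => lineHomotopy_mem_openStratum hcont hw hu.1⟩

end Stmt13
end

section
/- Let A ⊆ B be a thick full triangulated subcategory of a triangulated category B, and suppose B carries a duality (D, Φ) such that D(A) ⊆ A. Then the quotient triangulated category B/A inherits a duality, and both the inclusion A → B and the quotient functor B → B/A are symmetrically self-dual functors (they commute with the dualities compatibly with Φ). -/
open CategoryTheory Limits Pretriangulated

namespace Stmt17

variable (B : Type*) [Category B] [Preadditive B] [HasZeroObject B]
  [HasShift B ℤ] [∀ n : ℤ, (shiftFunctor B n).Additive] [Pretriangulated B]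
  [HasBinaryBiproducts B]

/-- The raw data of a duality on a triangulated category. -/
structure DualityData where
  obj : B → B
  map : ∀ {X Y : B}, (X ⟶ Y) → (obj Y ⟶ obj X)
  shiftComm : ∀ (n m : ℤ), n + m = 0 → ∀ X : B, obj (X⟦n⟧) ≅ (obj X)⟦m⟧
  Φ : ∀ X : B, X ⟶ obj (obj X)

variable {B}

/-- The dual of a triangle. -/
def dualTriangle (d : DualityData B) (T : Triangle B) : Triangle B :=
  Triangle.mk (d.map T.mor₂) (d.map T.mor₁)
    ((shiftNegShift (d.obj T.obj₁) (1 : ℤ)).inv ≫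
      ((d.shiftComm 1 (-1) (by ring) T.obj₁).inv ≫ d.map T.mor₃)⟦(1 : ℤ)⟧')

/-- `(D, Φ)` is a (`1`-)duality on the triangulated category `B`. -/
structure IsDuality (d : DualityData B) : Prop where
  map_id : ∀ X : B, d.map (𝟙 X) = 𝟙 (d.obj X)
  map_comp : ∀ {X Y Z : B} (f : X ⟶ Y) (g : Y ⟶ Z), d.map (f ≫ g) = d.map g ≫ d.map f
  map_add : ∀ {X Y : B} (f g : X ⟶ Y), d.map (f + g) = d.map f + d.map g
  dual_distinguished : ∀ T : Triangle B, T ∈ (distTriang B) →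
    dualTriangle d T ∈ distTriang B
  Φ_natural : ∀ {X Y : B} (f : X ⟶ Y), f ≫ d.Φ Y = d.Φ X ≫ d.map (d.map f)
  Φ_iso : ∀ X : B, IsIso (d.Φ X)
  coherence : ∀ X : B, d.Φ (d.obj X) ≫ d.map (d.Φ X) = 𝟙 (d.obj X)

/-- A (bare-hands, non-triangulated) duality on a category `A`. -/
structure Duality (A : Type*) [Category A] where
  obj : A → A
  map : ∀ {X Y : A}, (X ⟶ Y) → (obj Y ⟶ obj X)
  map_id : ∀ X : A, map (𝟙 X) = 𝟙 (obj X)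
  map_comp : ∀ {X Y Z : A} (f : X ⟶ Y) (g : Y ⟶ Z), map (f ≫ g) = map g ≫ map f
  Φ : ∀ X : A, X ⟶ obj (obj X)
  Φ_natural : ∀ {X Y : A} (f : X ⟶ Y), f ≫ Φ Y = Φ X ≫ map (map f)
  Φ_iso : ∀ X : A, IsIso (Φ X)
  coherence : ∀ X : A, Φ (obj X) ≫ map (Φ X) = 𝟙 (obj X)

/-- A duality on a triangulated category is in particular a duality. -/
def toDuality (d : DualityData B) (hd : IsDuality d) : Duality B :=
  ⟨d.obj, d.map, hd.map_id, hd.map_comp, d.Φ, hd.Φ_natural, hd.Φ_iso, hd.coherence⟩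

/-- `F` is symmetrically self-dual: it is equipped with a symmetric natural
isomorphism `F → D' ∘ F ∘ D`. -/
def IsSymmSelfDual {A C : Type*} [Category A] [Category C]
    (dA : Duality A) (dC : Duality C) (F : A ⥤ C) : Prop :=
  ∃ Ψ : ∀ X : A, F.obj X ⟶ dC.obj (F.obj (dA.obj X)),
    (∀ {X Y : A} (f : X ⟶ Y), F.map f ≫ Ψ Y = Ψ X ≫ dC.map (F.map (dA.map f))) ∧
    (∀ X : A, IsIso (Ψ X)) ∧
    (∀ X : A,
      F.map (dA.Φ X) ≫ dC.Φ (F.obj (dA.obj (dA.obj X))) ≫ dC.map (Ψ (dA.obj X)) =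
        Ψ X)

/-- The morphisms whose cone lies in the subcategory `P`; the Verdier quotient
`B/A` is the localization of `B` at this class. -/
def coneIn (P : B → Prop) : MorphismProperty B := fun X Y f =>
  ∃ (Z : B) (g : Y ⟶ Z) (h : Z ⟶ X⟦(1 : ℤ)⟧),
    Triangle.mk f g h ∈ (distTriang B) ∧ P Z

section Aux

variable (d : DualityData B) (P : B → Prop)

/-- The duality composed with the quotient functor, as a contravariant functor
into the Verdier quotient. -/
noncomputable def Fdual (hd : IsDuality d) : B ⥤ ((coneIn P).Localization)ᵒᵖ where
  obj X := Opposite.op ((coneIn P).Q.obj (d.obj X))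
  map f := ((coneIn P).Q.map (d.map f)).op
  map_id X := by
    show ((coneIn P).Q.map (d.map (𝟙 X))).op = _
    rw [hd.map_id, CategoryTheory.Functor.map_id]; rfl
  map_comp f g := by
    show ((coneIn P).Q.map (d.map (f ≫ g))).op = _
    rw [hd.map_comp, CategoryTheory.Functor.map_comp]; rfl

/-- If the cone of `f` is in `P` then so is the cone of `d.map f`. -/
lemma coneIn_dual (hd : IsDuality d) (hshift : ∀ (X : B) (n : ℤ), P X → P (X⟦n⟧))
    (hdual : ∀ X : B, P X → P (d.obj X))
    {X Y : B} (f : X ⟶ Y) (hf : coneIn P f) : coneIn P (d.map f) := by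
  obtain ⟨Z, g, h, hT, hZ⟩ := hf
  exact ⟨_, _, _,
    rot_of_distTriang _ (hd.dual_distinguished _ hT), hshift _ 1 (hdual Z hZ)⟩

lemma Fdual_inverts (hd : IsDuality d) (hshift : ∀ (X : B) (n : ℤ), P X → P (X⟦n⟧))
    (hdual : ∀ X : B, P X → P (d.obj X)) :
    (coneIn P).IsInvertedBy (Fdual d P hd) := by
  intro X Y f hf
  have : IsIso ((coneIn P).Q.map (d.map f)) :=
    (coneIn P).Q_inverts _ (coneIn_dual d P hd hshift hdual f hf)
  exact (inferInstance : IsIso ((coneIn P).Q.map (d.map f)).op)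

variable (hd : IsDuality d) (hshift : ∀ (X : B) (n : ℤ), P X → P (X⟦n⟧))
  (hdual : ∀ X : B, P X → P (d.obj X))

/-- The induced contravariant duality functor on the Verdier quotient. -/
noncomputable def Gdual : (coneIn P).Localization ⥤ ((coneIn P).Localization)ᵒᵖ :=
  Localization.Construction.lift (Fdual d P hd) (Fdual_inverts d P hd hshift hdual)

lemma Gdual_map {X Y : B} (f : X ⟶ Y) :
    (Gdual d P hd hshift hdual).map ((coneIn P).Q.map f) =
      ((coneIn P).Q.map (d.map f)).op := by
  have := Functor.congr_hom
    (Localization.Construction.fac (Fdual d P hd) (Fdual_inverts d P hd hshift hdual)) f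
  simp only [Functor.comp_map, eqToHom_refl, Category.comp_id, Category.id_comp] at this
  exact this

/-- The double-dual endofunctor on the Verdier quotient. -/
noncomputable def Hdual : (coneIn P).Localization ⥤ (coneIn P).Localization :=
  Gdual d P hd hshift hdual ⋙ (Gdual d P hd hshift hdual).leftOp

/-- The double-dual identification restricted along the quotient functor. -/
noncomputable def τdual :
    (coneIn P).Q ⋙ 𝟭 _ ⟶ (coneIn P).Q ⋙ Hdual d P hd hshift hdual where
  app X := (coneIn P).Q.map (d.Φ X)
  naturality X Y f := by
    show (coneIn P).Q.map f ≫ (coneIn P).Q.map (d.Φ Y) =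
      (coneIn P).Q.map (d.Φ X) ≫ (Hdual d P hd hshift hdual).map ((coneIn P).Q.map f)
    have h1 : (Hdual d P hd hshift hdual).map ((coneIn P).Q.map f) =
        (coneIn P).Q.map (d.map (d.map f)) := by
      show ((Gdual d P hd hshift hdual).map
        (((Gdual d P hd hshift hdual).map ((coneIn P).Q.map f)).unop)).unop = _
      rw [Gdual_map]
      show ((Gdual d P hd hshift hdual).map ((coneIn P).Q.map (d.map f))).unop = _
      rw [Gdual_map]
      rfl
    rw [h1, ← Functor.map_comp, hd.Φ_natural]
    exact Functor.map_comp _ _ _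

/-- The double-dual identification on the Verdier quotient. -/
noncomputable def Φdual : 𝟭 ((coneIn P).Localization) ⟶ Hdual d P hd hshift hdual :=
  Localization.Construction.natTransExtension (τdual d P hd hshift hdual)

lemma Φdual_app (X : B) :
    (Φdual d P hd hshift hdual).app ((coneIn P).Q.obj X) = (coneIn P).Q.map (d.Φ X) :=
  Localization.Construction.NatTransExtension.app_eq _ X

/-- The induced duality on the Verdier quotient. -/
noncomputable def dCdual : Duality ((coneIn P).Localization) where
  obj X := ((Gdual d P hd hshift hdual).obj X).unop
  map f := ((Gdual d P hd hshift hdual).map f).unop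
  map_id X := by
    show ((Gdual d P hd hshift hdual).map (𝟙 X)).unop = _
    rw [CategoryTheory.Functor.map_id]; rfl
  map_comp f g := by
    show ((Gdual d P hd hshift hdual).map (f ≫ g)).unop = _
    rw [CategoryTheory.Functor.map_comp]; rfl
  Φ X := (Φdual d P hd hshift hdual).app X
  Φ_natural f := (Φdual d P hd hshift hdual).naturality f
  Φ_iso X := by
    obtain ⟨x, rfl⟩ : ∃ x : B, (coneIn P).Q.obj x = X :=
      ⟨_, (Localization.Construction.objEquiv (coneIn P)).right_inv X⟩
    show IsIso ((Φdual d P hd hshift hdual).app ((coneIn P).Q.obj x))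
    rw [Φdual_app]
    have := hd.Φ_iso x
    exact Functor.map_isIso _ _
  coherence X := by
    obtain ⟨x, rfl⟩ : ∃ x : B, (coneIn P).Q.obj x = X :=
      ⟨_, (Localization.Construction.objEquiv (coneIn P)).right_inv X⟩
    show (Φdual d P hd hshift hdual).app ((coneIn P).Q.obj (d.obj x)) ≫
      ((Gdual d P hd hshift hdual).map
        ((Φdual d P hd hshift hdual).app ((coneIn P).Q.obj x))).unop =
      𝟙 ((coneIn P).Q.obj (d.obj x))
    rw [Φdual_app, Φdual_app]
    erw [Gdual_map]
    show (coneIn P).Q.map (d.Φ (d.obj x)) ≫ (coneIn P).Q.map (d.map (d.Φ x)) = _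
    rw [← CategoryTheory.Functor.map_comp, hd.coherence, CategoryTheory.Functor.map_id]

end Aux

/-- let `A ⊆ B` be a thick full triangulated subcategory (given by the
predicate `P`) of a triangulated category `B` with duality `(D, Φ)` such that
`D(A) ⊆ A`. Then the Verdier quotient `B/A` (the localization of `B` at the
morphisms with cone in `A`) inherits a duality, and both the inclusion `A → B` and
the quotient functor `B → B/A` are symmetrically self-dual. -/
theorem quotient_duality (d : DualityData B) (hd : IsDuality d) (P : B → Prop)
    (hzero : ∀ X : B, IsZero X → P X)
    (hiso : ∀ X Y : B, (X ≅ Y) → P X → P Y)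
    (hshift : ∀ (X : B) (n : ℤ), P X → P (X⟦n⟧))
    (hcone : ∀ T : Triangle B, T ∈ (distTriang B) →
      P T.obj₁ → P T.obj₂ → P T.obj₃)
    (hthick : ∀ X Y : B, P (X ⊞ Y) → P X ∧ P Y)
    (hdual : ∀ X : B, P X → P (d.obj X)) :
    (∃ dA : Duality (ObjectProperty.FullSubcategory P),
      (∀ X : ObjectProperty.FullSubcategory P, (dA.obj X).1 = d.obj X.1) ∧
      IsSymmSelfDual dA (toDuality d hd) (ObjectProperty.ι P)) ∧
    (∃ dC : Duality (coneIn P).Localization,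
      IsSymmSelfDual (toDuality d hd) dC (coneIn P).Q) := by
  constructor
  · refine ⟨⟨fun X => ⟨d.obj X.1, hdual X.1 X.2⟩, fun {X Y} f => ObjectProperty.homMk (d.map f.hom),
      fun X => ObjectProperty.hom_ext _ (hd.map_id X.1), fun f g => ObjectProperty.hom_ext _ (hd.map_comp f.hom g.hom),
      fun X => ObjectProperty.homMk (d.Φ X.1), fun f => ObjectProperty.hom_ext _ (hd.Φ_natural f.hom), fun X => ⟨⟨ObjectProperty.homMk (@CategoryTheory.inv B _ _ _ (d.Φ X.1) (hd.Φ_iso X.1)),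
        ObjectProperty.hom_ext _ (@IsIso.hom_inv_id B _ _ _ (d.Φ X.1) (hd.Φ_iso X.1)),
        ObjectProperty.hom_ext _ (@IsIso.inv_hom_id B _ _ _ (d.Φ X.1) (hd.Φ_iso X.1))⟩⟩,
      fun X => ObjectProperty.hom_ext _ (hd.coherence X.1)⟩, fun X => rfl, ?_⟩
    refine ⟨fun X => d.Φ X.1, fun f => hd.Φ_natural f.hom, fun X => hd.Φ_iso X.1, fun X => ?_⟩
    show d.Φ X.1 ≫ d.Φ (d.obj (d.obj X.1)) ≫ d.map (d.Φ (d.obj X.1)) = d.Φ X.1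
    rw [hd.coherence, Category.comp_id]
  · refine ⟨dCdual d P hd hshift hdual, fun X => (coneIn P).Q.map (d.Φ X), ?_, ?_, ?_⟩
    · intro X Y f
      show (coneIn P).Q.map f ≫ (coneIn P).Q.map (d.Φ Y) =
        (coneIn P).Q.map (d.Φ X) ≫
          ((Gdual d P hd hshift hdual).map ((coneIn P).Q.map (d.map f))).unop
      rw [Gdual_map]
      show _ = (coneIn P).Q.map (d.Φ X) ≫ (coneIn P).Q.map (d.map (d.map f))
      rw [← Functor.map_comp, ← Functor.map_comp, hd.Φ_natural]
    · intro X
      have := hd.Φ_iso X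
      exact (inferInstance : IsIso ((coneIn P).Q.map (d.Φ X)))
    · intro X
      show (coneIn P).Q.map (d.Φ X) ≫
        (Φdual d P hd hshift hdual).app ((coneIn P).Q.obj (d.obj (d.obj X))) ≫
        ((Gdual d P hd hshift hdual).map ((coneIn P).Q.map (d.Φ (d.obj X)))).unop =
        (coneIn P).Q.map (d.Φ X)
      rw [Φdual_app, Gdual_map]
      show (coneIn P).Q.map (d.Φ X) ≫ (coneIn P).Q.map (d.Φ (d.obj (d.obj X))) ≫
        (coneIn P).Q.map (d.map (d.Φ (d.obj X))) = _
      rw [← CategoryTheory.Functor.map_comp ((coneIn P).Q) (d.Φ (d.obj (d.obj X))), hd.coherence,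
        CategoryTheory.Functor.map_id, Category.comp_id]

end Stmt17
end
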